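/- arXiv:2104.03823 — 6 statements merged into one kernel-verified Lean document; each statement's English description precedes it below -/
import Mathlib

section
/- Let t^ch(ℓ,ℓ') be the signed charging time associated with a charging flow φ whose rate is non-increasing in the charge level (equivalently, ℓ ↦ φ(ℓ,τ) − ℓ is non-increasing). Then for any 0 ≤ e ≤ ℓ ≤ ℓ' ≤ M, t^ch(ℓ − e, ℓ' − e) ≤ t^ch(ℓ, ℓ'). -/
/-- if the marginal charging gain ℓ ↦ φ(ℓ,τ) − ℓ is non-increasing,
then for 0 ≤ e ≤ ℓ ≤ ℓ' ≤ M one has t^ch(ℓ−e, ℓ'−e) ≤ t^ch(ℓ, ℓ'). -/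
theorem stmt_2 (M : ℝ) (hM : 0 < M) (φ : ℝ → ℝ → ℝ) (tch : ℝ → ℝ → ℝ)
    (hinit : ∀ ℓ ∈ Set.Icc (0:ℝ) M, φ ℓ 0 = ℓ)
    (hsemi : ∀ ℓ ∈ Set.Icc (0:ℝ) M, ∀ τ τ' : ℝ, 0 ≤ τ → 0 ≤ τ' →
      φ ℓ (τ + τ') = φ (φ ℓ τ) τ')
    (hmem : ∀ ℓ ∈ Set.Icc (0:ℝ) M, ∀ τ : ℝ, 0 ≤ τ → φ ℓ τ ∈ Set.Icc (0:ℝ) M)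
    (hmono1 : ∀ τ : ℝ, 0 ≤ τ → ∀ ℓ ∈ Set.Icc (0:ℝ) M, ∀ ℓ' ∈ Set.Icc (0:ℝ) M,
      ℓ ≤ ℓ' → φ ℓ τ ≤ φ ℓ' τ)
    (hmono2 : ∀ ℓ ∈ Set.Icc (0:ℝ) M, ∀ τ τ' : ℝ, 0 ≤ τ → τ ≤ τ' → φ ℓ τ ≤ φ ℓ τ')
    (hmarg : ∀ τ : ℝ, 0 ≤ τ → ∀ ℓ ∈ Set.Icc (0:ℝ) M, ∀ ℓ' ∈ Set.Icc (0:ℝ) M,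
      ℓ ≤ ℓ' → φ ℓ' τ - ℓ' ≤ φ ℓ τ - ℓ)
    (htch_le : ∀ ℓ ∈ Set.Icc (0:ℝ) M, ∀ ℓ' ∈ Set.Icc (0:ℝ) M, ℓ ≤ ℓ' →
      IsLeast {τ : ℝ | 0 ≤ τ ∧ φ ℓ τ = ℓ'} (tch ℓ ℓ')) :
    ∀ e ℓ ℓ' : ℝ, 0 ≤ e → e ≤ ℓ → ℓ ≤ ℓ' → ℓ' ≤ M →
      tch (ℓ - e) (ℓ' - e) ≤ tch ℓ ℓ' := by
  intro e ℓ ℓ' he heℓ hℓℓ' hℓ'M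
  have hℓmem : ℓ ∈ Set.Icc (0:ℝ) M := ⟨le_trans he heℓ, le_trans hℓℓ' hℓ'M⟩
  have hℓ'mem : ℓ' ∈ Set.Icc (0:ℝ) M := ⟨le_trans hℓmem.1 hℓℓ', hℓ'M⟩
  have hle : (0:ℝ) ≤ ℓ - e := by linarith
  have hlemem : ℓ - e ∈ Set.Icc (0:ℝ) M := ⟨hle, by linarith⟩
  have hle'mem : ℓ' - e ∈ Set.Icc (0:ℝ) M := ⟨by linarith, by linarith⟩
  obtain ⟨⟨hτ0, hτeq⟩, hτleast⟩ := htch_le ℓ hℓmem ℓ' hℓ'mem hℓℓ'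
  obtain ⟨⟨hσ0, hσeq⟩, hσleast⟩ :=
    htch_le (ℓ - e) hlemem (ℓ' - e) hle'mem (by linarith)
  set τ := tch ℓ ℓ'
  -- φ (ℓ-e) τ ≥ ℓ' - e
  have hge : ℓ' - e ≤ φ (ℓ - e) τ := by
    have := hmarg τ hτ0 (ℓ - e) hlemem ℓ hℓmem (by linarith)
    linarith [hτeq ▸ this]
  by_contra hcon
  push_neg at hcon
  have hle2 : φ (ℓ - e) τ ≤ ℓ' - e := by
    have := hmono2 (ℓ - e) hlemem τ (tch (ℓ - e) (ℓ' - e)) hτ0 (le_of_lt hcon)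
    linarith [hσeq ▸ this]
  have : tch (ℓ - e) (ℓ' - e) ≤ τ := hσleast ⟨hτ0, le_antisymm hle2 hge⟩
  linarith
end

section
/- Let ⪯ be the charging-time preorder on S and, for δ, e ≥ 0, define ς_{δ,e}(ℓ,t) = (ℓ−e, t+δ) if ℓ ≥ e and ς_{δ,e}(ℓ,t) = (−∞, t+δ) otherwise (driving for duration δ consuming energy e). If e ≤ ℓ ≤ ℓ' and (ℓ',t') ⪯ (ℓ,t), then ς_{δ,e}(ℓ',t') ⪯ ς_{δ,e}(ℓ,t). -/
/-- The charging-time preorder ⪯ on S = ([0,M] ∪ {−∞}) × ℝ. -/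
def chargeRel (tch : ℝ → ℝ → ℝ) : Option ℝ × ℝ → Option ℝ × ℝ → Prop
  | (none, _), _ => True
  | (some _, _), (none, _) => False
  | (some l, t), (some l', t') => t' ≤ t + tch l l'

/-- Driving for duration δ consuming energy e: ς_{δ,e}(ℓ,t) = (ℓ−e, t+δ) if ℓ ≥ e,
and (−∞, t+δ) otherwise. -/
noncomputable def drive (δ e : ℝ) : Option ℝ × ℝ → Option ℝ × ℝ
  | (none, t) => (none, t + δ)
  | (some l, t) => if e ≤ l then (some (l - e), t + δ) else (none, t + δ)

/-- if e ≤ ℓ ≤ ℓ' and (ℓ',t') ⪯ (ℓ,t), then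
ς_{δ,e}(ℓ',t') ⪯ ς_{δ,e}(ℓ,t). -/
theorem stmt_5 (M : ℝ) (hM : 0 < M) (tch : ℝ → ℝ → ℝ)
    (hshift : ∀ e ℓ ℓ' : ℝ, 0 ≤ e → e ≤ ℓ → ℓ ≤ ℓ' → ℓ' ≤ M →
      tch (ℓ - e) (ℓ' - e) ≤ tch ℓ ℓ')
    (hanti : ∀ ℓ ∈ Set.Icc (0:ℝ) M, ∀ ℓ' ∈ Set.Icc (0:ℝ) M, tch ℓ ℓ' = - tch ℓ' ℓ)
    (δ e ℓ ℓ' t t' : ℝ) (hδ : 0 ≤ δ) (he : 0 ≤ e)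
    (h1 : e ≤ ℓ) (h2 : ℓ ≤ ℓ') (h3 : ℓ' ≤ M)
    (h : chargeRel tch (some ℓ', t') (some ℓ, t)) :
    chargeRel tch (drive δ e (some ℓ', t')) (drive δ e (some ℓ, t)) := by
  have h1' : e ≤ ℓ' := h1.trans h2
  simp only [drive, if_pos h1, if_pos h1', chargeRel] at h ⊢
  have hl : ℓ ∈ Set.Icc (0:ℝ) M := ⟨he.trans h1, h2.trans h3⟩
  have hl' : ℓ' ∈ Set.Icc (0:ℝ) M := ⟨he.trans h1', h3⟩
  have hle : ℓ - e ∈ Set.Icc (0:ℝ) M := ⟨by linarith [hl.1], by linarith [hl.2]⟩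
  have hle' : ℓ' - e ∈ Set.Icc (0:ℝ) M := ⟨by linarith [hl'.1], by linarith [hl'.2]⟩
  have hs := hshift e ℓ ℓ' he h1 h2 h3
  have h1' := hanti ℓ hl ℓ' hl'
  have h2' := hanti (ℓ - e) hle (ℓ' - e) hle'
  linarith
end

section
/- Let φ be a charging flow on [0,M] with the semigroup property and non-increasing marginal gain, and ⪯ the associated preorder. If (ℓ,t) ⪯ (ℓ',t') with finite levels and t̃ ≥ max(t,t'), then (φ(ℓ, t̃−t), t̃) ⪯ (φ(ℓ', t̃−t'), t̃); equivalently, φ(ℓ, t̃−t) ≤ φ(ℓ', t̃−t'). -/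
/-- if (ℓ,t) ⪯ (ℓ',t') and t̃ ≥ max(t,t'), then
(φ(ℓ, t̃−t), t̃) ⪯ (φ(ℓ', t̃−t'), t̃), equivalently φ(ℓ, t̃−t) ≤ φ(ℓ', t̃−t'). -/
theorem stmt_7 (M : ℝ) (hM : 0 < M) (φ : ℝ → ℝ → ℝ) (tch : ℝ → ℝ → ℝ)
    (hinit : ∀ ℓ ∈ Set.Icc (0:ℝ) M, φ ℓ 0 = ℓ)
    (hsemi : ∀ ℓ ∈ Set.Icc (0:ℝ) M, ∀ τ τ' : ℝ, 0 ≤ τ → 0 ≤ τ' →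
      φ ℓ (τ + τ') = φ (φ ℓ τ) τ')
    (hmem : ∀ ℓ ∈ Set.Icc (0:ℝ) M, ∀ τ : ℝ, 0 ≤ τ → φ ℓ τ ∈ Set.Icc (0:ℝ) M)
    (hmono1 : ∀ τ : ℝ, 0 ≤ τ → ∀ ℓ ∈ Set.Icc (0:ℝ) M, ∀ ℓ' ∈ Set.Icc (0:ℝ) M,
      ℓ ≤ ℓ' → φ ℓ τ ≤ φ ℓ' τ)
    (hmono2 : ∀ ℓ ∈ Set.Icc (0:ℝ) M, ∀ τ τ' : ℝ, 0 ≤ τ → τ ≤ τ' → φ ℓ τ ≤ φ ℓ τ')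
    (htch_le : ∀ ℓ ∈ Set.Icc (0:ℝ) M, ∀ ℓ' ∈ Set.Icc (0:ℝ) M, ℓ ≤ ℓ' →
      IsLeast {τ : ℝ | 0 ≤ τ ∧ φ ℓ τ = ℓ'} (tch ℓ ℓ'))
    (htch_gt : ∀ ℓ ℓ' : ℝ, ℓ' < ℓ → tch ℓ ℓ' = - tch ℓ' ℓ)
    (ℓ ℓ' t t' ttil : ℝ) (hℓ : ℓ ∈ Set.Icc (0:ℝ) M) (hℓ' : ℓ' ∈ Set.Icc (0:ℝ) M)
    (hrel : chargeRel tch (some ℓ, t) (some ℓ', t'))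
    (httil : max t t' ≤ ttil) :
    chargeRel tch (some (φ ℓ (ttil - t)), ttil) (some (φ ℓ' (ttil - t')), ttil) ∧
    φ ℓ (ttil - t) ≤ φ ℓ' (ttil - t') := by
  have ht : 0 ≤ ttil - t := by
    have := le_trans (le_max_left t t') httil; linarith
  have ht' : 0 ≤ ttil - t' := by
    have := le_trans (le_max_right t t') httil; linarith
  have hrel' : t' ≤ t + tch ℓ ℓ' := hrel
  have key : φ ℓ (ttil - t) ≤ φ ℓ' (ttil - t') := by
    rcases le_or_gt ℓ ℓ' with hle | hlt
    · obtain ⟨⟨hs0, hφs⟩, _⟩ := htch_le ℓ hℓ ℓ' hℓ' hle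
      have e : φ ℓ' (ttil - t') = φ ℓ (tch ℓ ℓ' + (ttil - t')) := by
        rw [hsemi ℓ hℓ _ _ hs0 ht', hφs]
      rw [e]
      exact hmono2 ℓ hℓ _ _ ht (by linarith)
    · have hgt := htch_gt ℓ ℓ' hlt
      obtain ⟨⟨hs0, hφs⟩, _⟩ := htch_le ℓ' hℓ' ℓ hℓ hlt.le
      have hrel2 : t' ≤ t - tch ℓ' ℓ := by rw [hgt] at hrel'; linarith
      have e : φ ℓ (ttil - t) = φ ℓ' (tch ℓ' ℓ + (ttil - t)) := by
        rw [hsemi ℓ' hℓ' _ _ hs0 ht, hφs]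
      rw [e]
      exact hmono2 ℓ' hℓ' _ _ (by linarith) (by linarith)
  refine ⟨?_, key⟩
  have ha := hmem ℓ hℓ _ ht
  have hb := hmem ℓ' hℓ' _ ht'
  obtain ⟨⟨hs0, _⟩, _⟩ := htch_le _ ha _ hb key
  show ttil ≤ ttil + tch (φ ℓ (ttil - t)) (φ ℓ' (ttil - t'))
  linarith
end

section
/- Under linear charging φ(ℓ,τ) = max(0, min(M, ℓ + ατ)), along the canonical schedule that charges as late as possible except minimally to reach the next station, the arrival level and arrival time at station s_i of a station sequence u = s₀,…,s_{k+1} = v with initial level ℓ_in ≥ e_{u,s₁} are given by ℓ⃖_{s_i} = max(0, ℓ_in − Σ_{j=1}^{i} e_{s_{j−1},s_j}) and t_b(s_i) = t_e(u) + Σ_{j=1}^{i} δ_{s_{j−1},s_j} + (1/α) max(0, Σ_{j=1}^{i} e_{s_{j−1},s_j} − ℓ_in), for i ∈ {1,…,k}. -/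
private lemma aux1 (x c : ℝ) (hc : 0 ≤ c) :
    max (max 0 x) c - c = max 0 (x - c) := by
  rcases le_total x 0 with h | h <;> rcases le_total x c with h2 | h2 <;>
    simp [max_def] <;> split_ifs <;> linarith

private lemma aux2 (x c : ℝ) (hc : 0 ≤ c) :
    max 0 (-x) + (max (max 0 x) c - max 0 x) = max 0 (c - x) := by
  rcases le_total x 0 with h | h <;> rcases le_total x c with h2 | h2 <;>
    simp [max_def] <;> split_ifs <;> linarith

/-- under linear charging, along the canonical schedule (charging
at each intermediate station only the minimum amount needed to reach the next
stop), the arrival level and arrival time at station s_i of a station sequence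
u = s₀,…,s_{k+1} = v with initial level ℓ_in ≥ e_{u,s₁} satisfy the closed
formulas ℓ⃖_{s_i} = max(0, ℓ_in − Σ_{j≤i} e_j) and
t_b(s_i) = t_e(u) + Σ_{j≤i} δ_j + (1/α) max(0, Σ_{j≤i} e_j − ℓ_in). -/
theorem stmt_16 (M α teu ℓin : ℝ) (k : ℕ) (hk : 1 ≤ k)
    (hM : 0 < M) (hα : 0 < α)
    (e δ : ℕ → ℝ) (he : ∀ j, 0 ≤ e j) (hδ : ∀ j, 0 ≤ δ j) (heM : ∀ j, e j ≤ M)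
    (hℓin : e 1 ≤ ℓin) (hℓinM : ℓin ≤ M)
    (lb tb : ℕ → ℝ)
    (hlb1 : lb 1 = ℓin - e 1) (htb1 : tb 1 = teu + δ 1)
    (hlbrec : ∀ i, 1 ≤ i → i < k →
      lb (i + 1) = max (lb i) (e (i + 1)) - e (i + 1))
    (htbrec : ∀ i, 1 ≤ i → i < k →
      tb (i + 1) = tb i + (max (lb i) (e (i + 1)) - lb i) / α + δ (i + 1)) :
    ∀ i, 1 ≤ i → i ≤ k →
      lb i = max 0 (ℓin - ∑ j ∈ Finset.Icc 1 i, e j) ∧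
      tb i = teu + (∑ j ∈ Finset.Icc 1 i, δ j)
        + (1 / α) * max 0 ((∑ j ∈ Finset.Icc 1 i, e j) - ℓin) := by
  intro i hi1
  induction i, hi1 using Nat.le_induction with
  | base =>
    intro _
    constructor
    · rw [hlb1, Finset.Icc_self, Finset.sum_singleton,
        max_eq_right (by linarith : (0:ℝ) ≤ ℓin - e 1)]
    · rw [htb1]
      simp only [Finset.Icc_self, Finset.sum_singleton,
        max_eq_left (by linarith : e 1 - ℓin ≤ 0)]
      ring
  | succ n hn ih =>
    intro hnk
    obtain ⟨hl, ht⟩ := ih (by omega)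
    have hes : ∑ j ∈ Finset.Icc 1 (n+1), e j = (∑ j ∈ Finset.Icc 1 n, e j) + e (n+1) :=
      Finset.sum_Icc_succ_top (by omega) e
    have hds : ∑ j ∈ Finset.Icc 1 (n+1), δ j = (∑ j ∈ Finset.Icc 1 n, δ j) + δ (n+1) :=
      Finset.sum_Icc_succ_top (by omega) δ
    set S := ∑ j ∈ Finset.Icc 1 n, e j with hS
    constructor
    · rw [hlbrec n hn (by omega), hl, hes]
      have := aux1 (ℓin - S) (e (n+1)) (he (n+1))
      rw [show ℓin - S - e (n+1) = ℓin - (S + e (n+1)) by ring] at this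
      exact this
    · rw [htbrec n hn (by omega), ht, hl, hes, hds]
      have h2 := aux2 (ℓin - S) (e (n+1)) (he (n+1))
      rw [show -(ℓin - S) = S - ℓin by ring,
        show e (n+1) - (ℓin - S) = S + e (n+1) - ℓin by ring] at h2
      rw [← h2]
      field_simp
      ring
end

section
/- Let a and a' be station sequences between u and v with costs c_a ≤ c_{a'} and end-level maps satisfying c⃗_a(ℓ) ≥ c⃗_{a'}(ℓ) for all ℓ (a dominates a'). Then for any feasible route r' containing a', the route r obtained from r' by replacing a' with a is feasible and has cost c_r ≤ c_{r'}. -/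
/-- if a station sequence a dominates a' (cost c_a ≤ c_{a'} and
end-level map c⃗_a ≥ c⃗_{a'} pointwise), then replacing a' by a in any feasible
route yields a feasible route of no greater cost. Levels in [0,M] ∪ {−∞} are
encoded in `EReal`; a route is feasible iff the fold of its level maps from the
full charge M is ≥ 0, and its cost is a fixed cost plus the sum of arc costs. -/
theorem stmt_18 (M cv : ℝ) (hM : 0 < M) (Arc : Type)
    (cost : Arc → ℝ) (fw : Arc → EReal → EReal)
    (hmono : ∀ b, Monotone (fw b)) (hbot : ∀ b, fw b ⊥ = ⊥)
    (a a' : Arc) (hc : cost a ≤ cost a')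
    (hdom : ∀ ℓ : EReal, fw a' ℓ ≤ fw a ℓ)
    (r₁ r₂ : List Arc)
    (hfeas : (0:EReal) ≤ List.foldl (fun ℓ b => fw b ℓ) (M : EReal) (r₁ ++ a' :: r₂)) :
    (0:EReal) ≤ List.foldl (fun ℓ b => fw b ℓ) (M : EReal) (r₁ ++ a :: r₂) ∧
    cv + ((r₁ ++ a :: r₂).map cost).sum ≤ cv + ((r₁ ++ a' :: r₂).map cost).sum := by
  have mono_fold : ∀ (r : List Arc), Monotone
      (fun x : EReal => List.foldl (fun ℓ b => fw b ℓ) x r) := by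
    intro r
    induction r with
    | nil => exact fun x y h => h
    | cons b t ih => exact fun x y h => ih (hmono b h)
  constructor
  · refine le_trans hfeas ?_
    simp only [List.foldl_append, List.foldl_cons]
    exact mono_fold r₂ (hdom _)
  · simp only [List.map_append, List.map_cons, List.sum_append, List.sum_cons]
    linarith
end

section
/- Under linear charging, for a station sequence a between u and v with available charging time constant ℓ^av = α(t_b(v) − t_e(u) − Σ_{j=1}^{k+1} δ_{s_{j−1},s_j}) and net increment Δℓ^unc = ℓ^av − Σ_{j=1}^{k+1} e_{s_{j−1},s_j} − e_v, the maximum achievable end level is c⃗_a(ℓ_in) = min(ℓ^max, ℓ_in + Δℓ) for ℓ_in ≥ ℓ^min and −∞ otherwise, where ℓ^min = max(e_{u,s₁}, −Δℓ^unc), ℓ^max = min(M, M + ℓ^av − Σ_{j=1}^{k} e_{s_{j−1},s_j}) − e_{s_k,v} − e_v, and Δℓ = min(Δℓ^unc, ℓ^max − ℓ^min). -/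
/-- Battery level at the departure from station s_i under a schedule (tb, te),
with linear charging φ(ℓ,τ) = max(0, min(M, ℓ + ατ)):
levE 0 = ℓ_in (level at the end of u) and
levE (i+1) = φ(levE i − e_{i+1}, te_{i+1} − tb_{i+1}). -/
def levE (M α ℓin : ℝ) (e : ℕ → ℝ) (tb te : ℕ → ℝ) : ℕ → ℝ
  | 0 => ℓin
  | i + 1 => max 0 (min M (levE M α ℓin e tb te i - e (i + 1)
      + α * (te (i + 1) - tb (i + 1))))

lemma levE_le_M (M α ℓin : ℝ) (e tb te : ℕ → ℝ) (hM : 0 ≤ M) (n : ℕ) :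
    levE M α ℓin e tb te (n + 1) ≤ M := by
  show max 0 _ ≤ M
  exact max_le hM (min_le_left _ _)

lemma levE_le_sum (M α ℓin : ℝ) (e tb te : ℕ → ℝ) (hα : 0 ≤ α) (n : ℕ)
    (hτ : ∀ i, 1 ≤ i → i ≤ n → tb i ≤ te i)
    (hfeas : ∀ i, 1 ≤ i → i ≤ n → 0 ≤ levE M α ℓin e tb te (i - 1) - e i) :
    levE M α ℓin e tb te n ≤
      ℓin - (∑ j ∈ Finset.Icc 1 n, e j) + α * ∑ j ∈ Finset.Icc 1 n, (te j - tb j) := by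
  induction n with
  | zero => simp [levE]
  | succ n ih =>
    have hih := ih (fun i h1 h2 => hτ i h1 (h2.trans (Nat.le_succ n)))
      (fun i h1 h2 => hfeas i h1 (h2.trans (Nat.le_succ n)))
    have h1 : 0 ≤ levE M α ℓin e tb te n - e (n + 1) := by
      have := hfeas (n + 1) (Nat.le_add_left 1 n) le_rfl
      simpa using this
    have h2 : 0 ≤ α * (te (n + 1) - tb (n + 1)) := by
      have := hτ (n + 1) (Nat.le_add_left 1 n) le_rfl
      have : 0 ≤ te (n + 1) - tb (n + 1) := by linarith
      positivity
    have hle : levE M α ℓin e tb te (n + 1) ≤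
        levE M α ℓin e tb te n - e (n + 1) + α * (te (n + 1) - tb (n + 1)) := by
      show max 0 _ ≤ _
      exact max_le (by linarith) (min_le_right _ _)
    rw [Finset.sum_Icc_succ_top (Nat.le_add_left 1 n),
        Finset.sum_Icc_succ_top (Nat.le_add_left 1 n)]
    nlinarith [hih]

lemma time_aux (teu : ℝ) (δ tb te : ℕ → ℝ) (k : ℕ)
    (h1 : tb 1 = teu + δ 1) (h2 : ∀ i, 1 ≤ i → i < k → tb (i + 1) = te i + δ (i + 1)) :
    ∀ i, 1 ≤ i → i ≤ k →
      te i = teu + (∑ j ∈ Finset.Icc 1 i, δ j) + ∑ j ∈ Finset.Icc 1 i, (te j - tb j) := by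
  intro i
  induction i with
  | zero => omega
  | succ i ih =>
    intro _ hik
    rcases Nat.eq_zero_or_pos i with hi | hi
    · subst hi
      simp only [Finset.Icc_self, Finset.sum_singleton]
      rw [h1]; ring
    · have hik' : i < k := hik
      have := ih hi (le_of_lt hik')
      rw [Finset.sum_Icc_succ_top (Nat.le_add_left 1 i),
          Finset.sum_Icc_succ_top (Nat.le_add_left 1 i),
          h2 i hi hik', this]
      ring

lemma time_sum (teu tbv : ℝ) (δ tb te : ℕ → ℝ) (k : ℕ) (hk : 1 ≤ k)
    (h1 : tb 1 = teu + δ 1) (h2 : ∀ i, 1 ≤ i → i < k → tb (i + 1) = te i + δ (i + 1))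
    (h3 : te k + δ (k + 1) = tbv) :
    ∑ j ∈ Finset.Icc 1 k, (te j - tb j) = tbv - teu - ∑ j ∈ Finset.Icc 1 (k + 1), δ j := by
  have := time_aux teu δ tb te k h1 h2 k hk le_rfl
  rw [Finset.sum_Icc_succ_top (Nat.le_add_left 1 k)]
  linarith

noncomputable section StmtAux
def Saux (e : ℕ → ℝ) (i : ℕ) : ℝ := ∑ j ∈ Finset.Icc 1 i, e j
def Paux (M ℓav ℓin : ℝ) (e : ℕ → ℝ) (i : ℕ) : ℝ :=
  if i = 0 then ℓin else min M (ℓin - Saux e i + ℓav)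
def τaux (M α ℓav ℓin : ℝ) (e : ℕ → ℝ) (k i : ℕ) : ℝ :=
  if i = k then (ℓav + ℓin - Saux e (k - 1) - Paux M ℓav ℓin e (k - 1)) / α
  else (e i + Paux M ℓav ℓin e i - Paux M ℓav ℓin e (i - 1)) / α
def tbaux (teu : ℝ) (δ τ : ℕ → ℝ) (i : ℕ) : ℝ :=
  teu + (∑ j ∈ Finset.Icc 1 i, δ j) + ∑ j ∈ Finset.Icc 1 (i - 1), τ j
def teaux (teu : ℝ) (δ τ : ℕ → ℝ) (i : ℕ) : ℝ := tbaux teu δ τ i + τ i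
end StmtAux

lemma Saux_succ (e : ℕ → ℝ) (i : ℕ) : Saux e (i + 1) = Saux e i + e (i + 1) :=
  Finset.sum_Icc_succ_top (Nat.le_add_left 1 i) e
lemma Saux_zero (e : ℕ → ℝ) : Saux e 0 = 0 := by simp [Saux]
lemma Saux_mono (e : ℕ → ℝ) (he : ∀ j, 0 ≤ e j) {i k : ℕ} (h : i ≤ k) :
    Saux e i ≤ Saux e k := by
  apply Finset.sum_le_sum_of_subset_of_nonneg
  · exact Finset.Icc_subset_Icc le_rfl h
  · intro j _ _; exact he j

section Main
variable (M α ℓav ℓin ev : ℝ) (e : ℕ → ℝ) (k : ℕ)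

lemma Paux_le (hinM : ℓin ≤ M) (hav : 0 ≤ ℓav) (i : ℕ) :
    Paux M ℓav ℓin e i ≤ min M (ℓin - Saux e i + ℓav) := by
  unfold Paux
  split
  · next h => subst h; rw [Saux_zero]; exact le_min hinM (by linarith)
  · exact le_rfl

lemma Paux_ge (hM : 0 ≤ M) (h0 : 0 ≤ ℓin) (he : ∀ j, 0 ≤ e j) (hev : 0 ≤ ev)
    (hkey : Saux e k + e (k + 1) + ev ≤ ℓin + ℓav) {i : ℕ} (hik : i ≤ k) :
    0 ≤ Paux M ℓav ℓin e i := by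
  unfold Paux
  split
  · exact h0
  · have h1 := Saux_mono e he hik
    have h2 := he (k + 1)
    exact le_min hM (by linarith)

-- P (i+1) ≥ P i - e (i+1)
lemma Paux_succ_ge (hinM : ℓin ≤ M) (hav : 0 ≤ ℓav) (he : ∀ j, 0 ≤ e j) (i : ℕ) :
    Paux M ℓav ℓin e i - e (i + 1) ≤ Paux M ℓav ℓin e (i + 1) := by
  have h1 := Paux_le M ℓav ℓin e hinM hav i
  have h2 : Paux M ℓav ℓin e (i + 1) = min M (ℓin - Saux e (i + 1) + ℓav) := if_neg (Nat.succ_ne_zero i)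
  rw [h2, Saux_succ]
  have h3 := he (i + 1)
  rw [le_min_iff] at h1
  exact le_min (by linarith [h1.1]) (by linarith [h1.2])

-- P i ≥ e (i+1) for i+1 ≤ k
lemma Paux_ge_e (hM : 0 ≤ M) (he : ∀ j, 0 ≤ e j) (hev : 0 ≤ ev)
    (heM : ∀ j, e j ≤ M) (he1 : e 1 ≤ ℓin)
    (hkey : Saux e k + e (k + 1) + ev ≤ ℓin + ℓav) {i : ℕ} (hik : i + 1 ≤ k) :
    e (i + 1) ≤ Paux M ℓav ℓin e i := by
  unfold Paux
  split
  · next h => subst h; exact he1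
  · have h1 : Saux e i + e (i + 1) = Saux e (i + 1) := (Saux_succ e i).symm
    have h2 := Saux_mono e he hik
    have h3 := he (k + 1)
    exact le_min (heM (i + 1)) (by linarith)

end Main

section Constr
variable (M α teu tbv ev ℓav ℓin : ℝ) (e δ : ℕ → ℝ) (k : ℕ)

lemma tbaux_one (τ : ℕ → ℝ) : tbaux teu δ τ 1 = teu + δ 1 := by
  simp [tbaux]

lemma teaux_sub (τ : ℕ → ℝ) (i : ℕ) : teaux teu δ τ i - tbaux teu δ τ i = τ i := by
  simp [teaux]

lemma tbaux_succ (τ : ℕ → ℝ) (i : ℕ) (hi : 1 ≤ i) :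
    tbaux teu δ τ (i + 1) = teaux teu δ τ i + δ (i + 1) := by
  obtain ⟨j, rfl⟩ : ∃ j, i = j + 1 := ⟨i - 1, by omega⟩
  simp only [tbaux, teaux, Nat.add_sub_cancel, Nat.succ_sub_one]
  rw [Finset.sum_Icc_succ_top (Nat.le_add_left 1 (j + 1)) δ,
      Finset.sum_Icc_succ_top (Nat.le_add_left 1 j) τ]
  ring

lemma τaux_sum (hα : 0 < α) (n : ℕ) (hn : n < k) :
    α * ∑ j ∈ Finset.Icc 1 n, τaux M α ℓav ℓin e k j
      = Saux e n + Paux M ℓav ℓin e n - ℓin := by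
  induction n with
  | zero => simp [Saux_zero, Paux]
  | succ n ih =>
    rw [Finset.sum_Icc_succ_top (Nat.le_add_left 1 n),
        mul_add, ih (by omega)]
    have hne : n + 1 ≠ k := by omega
    rw [τaux, if_neg hne, Nat.add_sub_cancel, mul_div_cancel₀ _ (ne_of_gt hα),
        Saux_succ]
    ring

lemma τaux_total (hα : 0 < α) (hk : 1 ≤ k) :
    α * ∑ j ∈ Finset.Icc 1 k, τaux M α ℓav ℓin e k j = ℓav := by
  obtain ⟨m, rfl⟩ : ∃ m, k = m + 1 := ⟨k - 1, by omega⟩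
  rw [Finset.sum_Icc_succ_top (Nat.le_add_left 1 m), mul_add,
      τaux_sum M α ℓav ℓin e (m + 1) hα m (by omega)]
  rw [τaux, if_pos rfl, Nat.add_sub_cancel, mul_div_cancel₀ _ (ne_of_gt hα)]
  ring
end Constr

section Constr2
variable (M α teu tbv ev ℓav ℓin : ℝ) (e δ : ℕ → ℝ) (k : ℕ)

lemma τaux_nonneg (hα : 0 < α) (hinM : ℓin ≤ M) (hav : 0 ≤ ℓav) (he : ∀ j, 0 ≤ e j)
    {i : ℕ} (hi : 1 ≤ i) (hik : i ≤ k) : 0 ≤ τaux M α ℓav ℓin e k i := by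
  unfold τaux
  split
  · apply div_nonneg _ (le_of_lt hα)
    have h1 := Paux_le M ℓav ℓin e hinM hav (k - 1)
    rw [le_min_iff] at h1
    linarith [h1.2]
  · obtain ⟨j, rfl⟩ : ∃ j, i = j + 1 := ⟨i - 1, by omega⟩
    apply div_nonneg _ (le_of_lt hα)
    have := Paux_succ_ge M ℓav ℓin e hinM hav he j
    rw [Nat.add_sub_cancel]
    linarith

lemma levE_inv (hα : 0 < α) (hM : 0 ≤ M) (h0 : 0 ≤ ℓin) (hinM : ℓin ≤ M)
    (hav : 0 ≤ ℓav) (he : ∀ j, 0 ≤ e j) (hev : 0 ≤ ev)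
    (hkey : Saux e k + e (k + 1) + ev ≤ ℓin + ℓav) :
    ∀ i, i ≤ k →
      levE M α ℓin e (tbaux teu δ (τaux M α ℓav ℓin e k))
        (teaux teu δ (τaux M α ℓav ℓin e k)) i = Paux M ℓav ℓin e i := by
  intro i
  induction i with
  | zero => intro _; simp [levE, Paux]
  | succ i ih =>
    intro hik
    have hii := ih (by omega)
    show max 0 (min M _) = _
    rw [teaux_sub, hii]
    by_cases hik' : i + 1 = k
    · rw [τaux, if_pos hik', ← hik', Nat.add_sub_cancel,
          mul_div_cancel₀ _ (ne_of_gt hα)]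
      have h1 : Paux M ℓav ℓin e i - e (i + 1) + (ℓav + ℓin - Saux e i - Paux M ℓav ℓin e i)
          = ℓin - Saux e (i + 1) + ℓav := by rw [Saux_succ]; ring
      rw [h1]
      have h2 : Paux M ℓav ℓin e (i + 1) = min M (ℓin - Saux e (i + 1) + ℓav) :=
        if_neg (Nat.succ_ne_zero i)
      rw [← h2]
      exact max_eq_right (Paux_ge M ℓav ℓin ev e k hM h0 he hev hkey hik)
    · rw [τaux, if_neg hik', Nat.add_sub_cancel, mul_div_cancel₀ _ (ne_of_gt hα)]
      have h1 : Paux M ℓav ℓin e i - e (i + 1) + (e (i + 1) + Paux M ℓav ℓin e (i + 1)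
          - Paux M ℓav ℓin e i) = Paux M ℓav ℓin e (i + 1) := by ring
      rw [h1]
      have h2 : Paux M ℓav ℓin e (i + 1) ≤ M := by
        have := Paux_le M ℓav ℓin e hinM hav (i + 1)
        rw [le_min_iff] at this; exact this.1
      rw [min_eq_right h2]
      exact max_eq_right (Paux_ge M ℓav ℓin ev e k hM h0 he hev hkey hik)
end Constr2

lemma exists_schedule (M α teu tbv ev ℓav ℓin : ℝ) (e δ : ℕ → ℝ) (k : ℕ)
    (hk : 1 ≤ k) (hα : 0 < α) (hM : 0 ≤ M) (hav : 0 ≤ ℓav)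
    (hℓav : ℓav = α * (tbv - teu - ∑ j ∈ Finset.Icc 1 (k + 1), δ j))
    (he : ∀ j, 0 ≤ e j) (hev : 0 ≤ ev) (heM : ∀ j, e j ≤ M)
    (h0 : 0 ≤ ℓin) (hinM : ℓin ≤ M) (he1 : e 1 ≤ ℓin)
    (hkey : Saux e k + e (k + 1) + ev ≤ ℓin + ℓav) :
    ∃ tb te : ℕ → ℝ,
      (tb 1 = teu + δ 1) ∧
      (∀ i, 1 ≤ i → i < k → tb (i + 1) = te i + δ (i + 1)) ∧
      (te k + δ (k + 1) = tbv) ∧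
      (∀ i, 1 ≤ i → i ≤ k → tb i ≤ te i) ∧
      (∀ i, 1 ≤ i → i ≤ k → 0 ≤ levE M α ℓin e tb te (i - 1) - e i) ∧
      levE M α ℓin e tb te k = min M (ℓin - Saux e k + ℓav) := by
  set τ := τaux M α ℓav ℓin e k with hτ
  refine ⟨tbaux teu δ τ, teaux teu δ τ, tbaux_one teu δ τ, ?_, ?_, ?_, ?_, ?_⟩
  · intro i hi _; exact tbaux_succ teu δ τ i hi
  · obtain ⟨m, rfl⟩ : ∃ m, k = m + 1 := ⟨k - 1, by omega⟩
    have htot := τaux_total M α ℓav ℓin e (m + 1) hα hk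
    rw [← hτ] at htot
    have hsum : ∑ j ∈ Finset.Icc 1 (m + 1), τ j
        = tbv - teu - ∑ j ∈ Finset.Icc 1 (m + 1 + 1), δ j := by
      refine mul_left_cancel₀ (ne_of_gt hα) ?_
      rw [htot, hℓav]
    show tbaux teu δ τ (m + 1) + τ (m + 1) + δ (m + 2) = tbv
    rw [tbaux, Nat.add_sub_cancel]
    rw [Finset.sum_Icc_succ_top (Nat.le_add_left 1 (m + 1)) δ] at hsum
    rw [Finset.sum_Icc_succ_top (Nat.le_add_left 1 m) τ] at hsum
    linarith
  · intro i hi hik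
    have := τaux_nonneg M α ℓav ℓin e k hα hinM hav he hi hik
    rw [← hτ] at this
    show _ ≤ tbaux teu δ τ i + τ i
    linarith
  · intro i hi hik
    obtain ⟨j, rfl⟩ : ∃ j, i = j + 1 := ⟨i - 1, by omega⟩
    rw [Nat.add_sub_cancel, hτ,
      levE_inv M α teu ev ℓav ℓin e δ k hα hM h0 hinM hav he hev hkey j (by omega)]
    have := Paux_ge_e M ℓav ℓin ev e k hM he hev heM he1 hkey hik
    linarith
  · rw [hτ, levE_inv M α teu ev ℓav ℓin e δ k hα hM h0 hinM hav he hev hkey k le_rfl,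
        Paux, if_neg (by omega : k ≠ 0)]

/-- under linear charging, the maximum achievable end level of a
station sequence u = s₀,…,s_{k+1} = v (supremum over all feasible schedules of
the end level, ⊥ = −∞ if none is feasible) is
c⃗_a(ℓ_in) = min(ℓ^max, ℓ_in + Δℓ) for ℓ_in ≥ ℓ^min and −∞ otherwise, with the
stated closed formulas for ℓ^min, ℓ^max and Δℓ. -/
theorem stmt_19 (M α teu tbv ev : ℝ) (hM : 0 < M) (hα : 0 < α) (hev : 0 ≤ ev)
    (k : ℕ) (hk : 1 ≤ k) (e δ : ℕ → ℝ)
    (he : ∀ j, 0 ≤ e j) (hδ : ∀ j, 0 ≤ δ j)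
    (htime : teu + ∑ j ∈ Finset.Icc 1 (k + 1), δ j ≤ tbv)
    (heM : ∀ j, e j ≤ M) (hlast : e (k + 1) + ev ≤ M)
    (ℓav Δℓunc ℓmin ℓmax Δℓ : ℝ)
    (hℓav : ℓav = α * (tbv - teu - ∑ j ∈ Finset.Icc 1 (k + 1), δ j))
    (hΔℓunc : Δℓunc = ℓav - (∑ j ∈ Finset.Icc 1 (k + 1), e j) - ev)
    (hℓmin : ℓmin = max (e 1) (-Δℓunc))
    (hℓmax : ℓmax = min M (M + ℓav - ∑ j ∈ Finset.Icc 1 k, e j) - e (k + 1) - ev)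
    (hΔℓ : Δℓ = min Δℓunc (ℓmax - ℓmin))
    (fc : ℝ → EReal)
    (hfc : ∀ ℓin : ℝ, ℓin ∈ Set.Icc (0:ℝ) M → fc ℓin =
      sSup {x : EReal | ∃ tb te : ℕ → ℝ,
        (tb 1 = teu + δ 1) ∧
        (∀ i, 1 ≤ i → i < k → tb (i + 1) = te i + δ (i + 1)) ∧
        (te k + δ (k + 1) = tbv) ∧
        (∀ i, 1 ≤ i → i ≤ k → tb i ≤ te i) ∧
        (∀ i, 1 ≤ i → i ≤ k → 0 ≤ levE M α ℓin e tb te (i - 1) - e i) ∧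
        (0 ≤ levE M α ℓin e tb te k - e (k + 1) - ev) ∧
        x = ((levE M α ℓin e tb te k - e (k + 1) - ev : ℝ) : EReal)}) :
    ∀ ℓin : ℝ, ℓin ∈ Set.Icc (0:ℝ) M →
      fc ℓin = if ℓmin ≤ ℓin then ((min ℓmax (ℓin + Δℓ) : ℝ) : EReal) else ⊥ := by
  intro ℓin hℓ
  obtain ⟨h0, hinM⟩ := hℓ
  rw [hfc ℓin ⟨h0, hinM⟩]
  have hav : 0 ≤ ℓav := by
    rw [hℓav]; exact mul_nonneg hα.le (by linarith)
  have hEsum : (∑ j ∈ Finset.Icc 1 (k + 1), e j) = Saux e k + e (k + 1) := Saux_succ e k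
  have hEk : (∑ j ∈ Finset.Icc 1 k, e j) = Saux e k := rfl
  -- the end value for a schedule is bounded by V
  have hub : ∀ tb te : ℕ → ℝ,
      (tb 1 = teu + δ 1) →
      (∀ i, 1 ≤ i → i < k → tb (i + 1) = te i + δ (i + 1)) →
      (te k + δ (k + 1) = tbv) →
      (∀ i, 1 ≤ i → i ≤ k → tb i ≤ te i) →
      (∀ i, 1 ≤ i → i ≤ k → 0 ≤ levE M α ℓin e tb te (i - 1) - e i) →
      levE M α ℓin e tb te k ≤ min M (ℓin - Saux e k + ℓav) := by
    intro tb te h1 h2 h3 h4 h5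
    refine le_min ?_ ?_
    · obtain ⟨m, rfl⟩ : ∃ m, k = m + 1 := ⟨k - 1, by omega⟩
      exact levE_le_M M α ℓin e tb te hM.le m
    · have hb := levE_le_sum M α ℓin e tb te hα.le k h4 h5
      have ht := time_sum teu tbv δ tb te k hk h1 h2 h3
      rw [ht] at hb
      have : α * (tbv - teu - ∑ j ∈ Finset.Icc 1 (k + 1), δ j) = ℓav := hℓav.symm
      rw [hEk] at hb
      linarith
  by_cases hge : ℓmin ≤ ℓin
  · rw [if_pos hge]
    have he1 : e 1 ≤ ℓin := le_trans (le_max_left _ _) (hℓmin ▸ hge)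
    have hkey : Saux e k + e (k + 1) + ev ≤ ℓin + ℓav := by
      have h2 : -Δℓunc ≤ ℓin := le_trans (le_max_right _ _) (hℓmin ▸ hge)
      rw [hΔℓunc, hEsum] at h2; linarith
    obtain ⟨tb, te, H1, H2, H3, H4, H5, Hval⟩ :=
      exists_schedule M α teu tbv ev ℓav ℓin e δ k hk hα hM.le hav hℓav he hev heM
        h0 hinM he1 hkey
    set V : ℝ := min M (ℓin - Saux e k + ℓav) - e (k + 1) - ev with hV
    have hVm : e (k + 1) + ev ≤ min M (ℓin - Saux e k + ℓav) :=
      le_min (by linarith) (by linarith)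
    have heq : min ℓmax (ℓin + Δℓ) = V := by
      have key : min ℓmax (ℓin + Δℓ) = min ℓmax (ℓin + Δℓunc) := by
        rcases le_total Δℓunc (ℓmax - ℓmin) with h | h
        · rw [hΔℓ, min_eq_left h]
        · rw [hΔℓ, min_eq_right h,
              min_eq_left (by linarith : ℓmax ≤ ℓin + (ℓmax - ℓmin)),
              min_eq_left (by linarith : ℓmax ≤ ℓin + Δℓunc)]
      rw [key, hℓmax, hEk, hV, hΔℓunc, hEsum]
      rcases le_total (ℓin - Saux e k + ℓav) M with h | h
      · rw [min_eq_right h]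
        have hle : ℓin + (ℓav - (Saux e k + e (k + 1)) - ev)
            ≤ min M (M + ℓav - Saux e k) - e (k + 1) - ev := by
          have := le_min h (by linarith : ℓin - Saux e k + ℓav ≤ M + ℓav - Saux e k)
          linarith
        rw [min_eq_right hle]
        ring
      · have hMB : M ≤ M + ℓav - Saux e k := le_trans h (by linarith)
        rw [min_eq_left hMB, min_eq_left h,
            min_eq_left (by linarith : M - e (k + 1) - ev
              ≤ ℓin + (ℓav - (Saux e k + e (k + 1)) - ev))]
    rw [heq]
    refine le_antisymm (sSup_le ?_) (le_sSup ?_)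
    · rintro x ⟨tb', te', h1, h2, h3, h4, h5, h6, rfl⟩
      refine EReal.coe_le_coe_iff.mpr ?_
      have := hub tb' te' h1 h2 h3 h4 h5
      rw [hV]
      linarith
    · exact ⟨tb, te, H1, H2, H3, H4, H5, by rw [Hval]; linarith,
        by rw [Hval, hV]⟩
  · rw [if_neg hge]
    have hempty : {x : EReal | ∃ tb te : ℕ → ℝ,
        (tb 1 = teu + δ 1) ∧
        (∀ i, 1 ≤ i → i < k → tb (i + 1) = te i + δ (i + 1)) ∧
        (te k + δ (k + 1) = tbv) ∧
        (∀ i, 1 ≤ i → i ≤ k → tb i ≤ te i) ∧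
        (∀ i, 1 ≤ i → i ≤ k → 0 ≤ levE M α ℓin e tb te (i - 1) - e i) ∧
        (0 ≤ levE M α ℓin e tb te k - e (k + 1) - ev) ∧
        x = ((levE M α ℓin e tb te k - e (k + 1) - ev : ℝ) : EReal)} = ∅ := by
      ext x
      simp only [Set.mem_setOf_eq, Set.mem_empty_iff_false, iff_false]
      rintro ⟨tb, te, h1, h2, h3, h4, h5, h6, rfl⟩
      rw [hℓmin, max_le_iff, not_and_or] at hge
      rcases hge with h | h
      · have := h5 1 le_rfl hk
        have h0' : levE M α ℓin e tb te 0 = ℓin := rfl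
        simp only [Nat.sub_self, h0'] at this
        exact h (by linarith)
      · have := hub tb te h1 h2 h3 h4 h5
        rw [le_min_iff] at this
        rw [hΔℓunc, hEsum] at h
        push_neg at h
        linarith [this.2]
    rw [hempty, sSup_empty]
end
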